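/- Let (C, ⊕, ⪯) satisfy right-isotonicity and absorption for a class of costs. If every arc on a cycle W_c has C-non-negative cost, then for any walk decomposition W = W_1.W_c.W_2 where W_c is a cycle, the walk W_1.W_2 obtained by removing the cycle satisfies γ^D(B', W_1.W_2) ⪯ γ^D(B', W). -/

import Mathlib

/-- Cost of a walk in a weighted digraph: combine arc weights left-to-right from `b`. -/
def walkCostD {V C : Type*} (comb : C → C → C) (b : C) (l : List (V × V × C)) : C :=
  l.foldl (fun c a => comb c a.2.2) b

section WalkCost

variable {V C : Type*} (comb : C → C → C) (le : C → C → Prop)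

theorem walkCostD_append (b : C) (l₁ l₂ : List (V × V × C)) :
    walkCostD comb b (l₁ ++ l₂) = walkCostD comb (walkCostD comb b l₁) l₂ :=
  List.foldl_append

variable {comb le}

theorem walkCostD_mono_start (hiso : ∀ c₁ c₂ c, le c₁ c₂ → le (comb c₁ c) (comb c₂ c))
    (l : List (V × V × C)) {b₁ b₂ : C} (h : le b₁ b₂) :
    le (walkCostD comb b₁ l) (walkCostD comb b₂ l) := by
  induction l generalizing b₁ b₂ with
  | nil => exact h
  | cons a l ih => exact ih (hiso _ _ _ h)

theorem le_walkCostD_of_nonneg (hrefl : ∀ c, le c c) (htrans : Transitive le)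
    {l : List (V × V × C)} (hnn : ∀ a ∈ l, ∀ d, le d (comb d a.2.2)) (d : C) :
    le d (walkCostD comb d l) := by
  induction l generalizing d with
  | nil => exact hrefl d
  | cons a l ih =>
    exact htrans (hnn a List.mem_cons_self d)
      (ih (fun x hx => hnn x (List.mem_cons_of_mem a hx)) (comb d a.2.2))

end WalkCost

/-- Removing a cycle `W_c` whose arcs all have `C`-non-negative costs from a walk
`W = W₁.W_c.W₂` does not increase the cost: `γ^D(B', W₁.W₂) ⪯ γ^D(B', W)`,
under right-isotonicity (with `⪯` reflexive and transitive). -/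
theorem remove_cycle_cost {V C : Type*} (comb : C → C → C) (le : C → C → Prop)
    (hrefl : ∀ c, le c c) (htrans : Transitive le)
    (hiso : ∀ c₁ c₂ c, le c₁ c₂ → le (comb c₁ c) (comb c₂ c))
    (b : C) (W₁ Wc W₂ : List (V × V × C))
    (hnn : ∀ a ∈ Wc, ∀ d, le d (comb d a.2.2)) :
    le (walkCostD comb b (W₁ ++ W₂)) (walkCostD comb b (W₁ ++ Wc ++ W₂)) := by
  rw [walkCostD_append, walkCostD_append, walkCostD_append]
  exact walkCostD_mono_start hiso W₂ (le_walkCostD_of_nonneg hrefl htrans hnn _)
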